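/- arXiv:2001.01486 — 4 statements merged into one kernel-verified Lean document; each statement's English description precedes it below -/
import Mathlib

section
/- Let θ ∈ ℝ and let Y_θ be the Crump-Mode-Jagers branching process in which each individual, independently, begets children according to a Poisson point process on [0,∞) of intensity e^{-θa} da in its age a, started from one ancestor at time 0. Then for every t ≥ 0, E[Y_θ(t)] = (e^{(1-θ)t} − θ)/(1−θ) if θ ≠ 1, and E[Y_1(t)] = 1 + t if θ = 1. -/
open MeasureTheory

/-- The reproduction intensity measure `e^{-θs} ds` on `[0,∞)`. -/
noncomputable def reproMeasure (θ : ℝ) : Measure ℝ :=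
  volume.withDensity fun s => ENNReal.ofReal (if 0 ≤ s then Real.exp (-θ * s) else 0)

/-- `n`-fold additive convolution power of a measure on `ℝ` (with `μ^{*0} = δ₀`). -/
noncomputable def convPow (μ : Measure ℝ) : ℕ → Measure ℝ
  | 0 => Measure.dirac 0
  | n + 1 => (convPow μ n).conv μ

/-- The expected population size `E[Y_θ(t)] = ∑_{n≥0} μ_θ^{*n}([0,t])` of the
general branching process with reproduction intensity `e^{-θa} da`. -/
noncomputable def meanYule (θ t : ℝ) : ℝ :=
  (∑' n : ℕ, convPow (reproMeasure θ) n (Set.Icc 0 t)).toReal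

/-! The reproduction measure has density `e^{-θx}` on `[0,∞)`, and by induction its `(n+1)`-fold
convolution power has density `e^{-θx} xⁿ / n!`. Summed over all generations these densities give
`e^{-θx} eˣ = e^{(1-θ)x}`, so the mean is `1` (the ancestor) plus `∫₀ᵗ e^{(1-θ)x} dx`. -/

open ENNReal Set

noncomputable def convPowDensity (θ : ℝ) (n : ℕ) (x : ℝ) : ℝ≥0∞ :=
  ENNReal.ofReal (if 0 ≤ x then Real.exp (-θ * x) * x ^ n / n.factorial else 0)

lemma measurable_convPowDensity (θ : ℝ) (n : ℕ) : Measurable (convPowDensity θ n) :=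
  ENNReal.measurable_ofReal.comp (Measurable.ite measurableSet_Ici (by fun_prop) measurable_const)

lemma reproMeasure_eq_withDensity (θ : ℝ) :
    reproMeasure θ = volume.withDensity (convPowDensity θ 0) := by
  unfold reproMeasure convPowDensity
  simp

lemma convPowDensity_mul_convPowDensity_zero (θ : ℝ) (n : ℕ) (x y : ℝ) :
    convPowDensity θ n y * convPowDensity θ 0 (-y + x) =
      (Icc 0 x).indicator (fun y ↦ ENNReal.ofReal (Real.exp (-θ * x) * y ^ n / n.factorial)) y := by
  by_cases hy : y ∈ Icc 0 x
  · rw [indicator_of_mem hy]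
    obtain ⟨hy0, hyx⟩ := hy
    rw [convPowDensity, convPowDensity, if_pos hy0,
      if_pos (by linarith), ← ENNReal.ofReal_mul (by positivity)]
    have hexp : Real.exp (-θ * x) = Real.exp (-θ * y) * Real.exp (-θ * (-y + x)) := by
      rw [← Real.exp_add]; ring_nf
    rw [hexp, pow_zero, Nat.factorial_zero, Nat.cast_one, div_one, mul_one]
    ring_nf
  · rw [indicator_of_notMem hy]
    rcases not_and_or.mp hy with hy | hy
    · simp [convPowDensity, hy]
    · simp [convPowDensity, show ¬ 0 ≤ -y + x by linarith [not_le.mp hy]]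

lemma lconvolution_convPowDensity (θ : ℝ) (n : ℕ) :
    convPowDensity θ n ⋆ₗ convPowDensity θ 0 = convPowDensity θ (n + 1) := by
  ext x
  simp only [lconvolution_def, convPowDensity_mul_convPowDensity_zero,
    lintegral_indicator measurableSet_Icc]
  rcases lt_or_ge x 0 with hx | hx
  · simp [convPowDensity, hx.not_ge]
  rw [← ofReal_integral_eq_lintegral_ofReal (Continuous.integrableOn_Icc (by fun_prop))
      ((ae_restrict_iff' measurableSet_Icc).mpr (ae_of_all _ fun y hy ↦ by
        have := hy.1; positivity)),
    integral_Icc_eq_integral_Ioc, ← intervalIntegral.integral_of_le hx, convPowDensity, if_pos hx]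
  simp_rw [mul_div_assoc, intervalIntegral.integral_const_mul, intervalIntegral.integral_div,
    integral_pow, zero_pow n.succ_ne_zero, sub_zero, Nat.factorial_succ]
  push_cast
  congr 1
  field_simp

lemma convPow_reproMeasure_succ (θ : ℝ) (n : ℕ) :
    convPow (reproMeasure θ) (n + 1) = volume.withDensity (convPowDensity θ n) := by
  induction n with
  | zero => simp [convPow, reproMeasure_eq_withDensity]
  | succ n ih =>
    rw [convPow, ih, reproMeasure_eq_withDensity, conv_withDensity_eq_lconvolution
      (measurable_convPowDensity θ n) (measurable_convPowDensity θ 0), lconvolution_convPowDensity]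

lemma tsum_convPowDensity (θ : ℝ) {x : ℝ} (hx : 0 ≤ x) :
    ∑' n, convPowDensity θ n x = ENNReal.ofReal (Real.exp ((1 - θ) * x)) := by
  have hsum : HasSum (fun n : ℕ ↦ Real.exp (-θ * x) * (x ^ n / n.factorial))
      (Real.exp (-θ * x) * Real.exp x) :=
    Real.exp_eq_exp_ℝ ▸ (NormedSpace.expSeries_div_hasSum_exp x).mul_left _
  simp only [convPowDensity, if_pos hx, mul_div_assoc]
  rw [← ENNReal.ofReal_tsum_of_nonneg (fun n ↦ by positivity) hsum.summable, hsum.tsum_eq,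
    ← Real.exp_add]
  ring_nf

lemma tsum_convPow_reproMeasure_Icc (θ : ℝ) {t : ℝ} (ht : 0 ≤ t) :
    ∑' n, convPow (reproMeasure θ) n (Icc 0 t) =
      1 + ENNReal.ofReal (∫ x in 0..t, Real.exp ((1 - θ) * x)) := by
  have hancestor : convPow (reproMeasure θ) 0 (Icc 0 t) = 1 :=
    Measure.dirac_apply_of_mem ⟨le_rfl, ht⟩
  have hdescendants : ∑' n, convPow (reproMeasure θ) (n + 1) (Icc 0 t) =
      ∫⁻ x in Icc 0 t, ENNReal.ofReal (Real.exp ((1 - θ) * x)) := by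
    simp_rw [convPow_reproMeasure_succ, withDensity_apply _ measurableSet_Icc]
    rw [← lintegral_tsum fun n ↦ (measurable_convPowDensity θ n).aemeasurable]
    exact setLIntegral_congr_fun measurableSet_Icc fun x hx ↦ tsum_convPowDensity θ hx.1
  rw [tsum_eq_zero_add' ENNReal.summable, hancestor, hdescendants, intervalIntegral.integral_of_le ht,
    ← integral_Icc_eq_integral_Ioc, ofReal_integral_eq_lintegral_ofReal
      (Continuous.integrableOn_Icc (by fun_prop)) (ae_of_all _ fun x ↦ (Real.exp_pos _).le)]

lemma meanYule_eq_one_add_integral (θ : ℝ) {t : ℝ} (ht : 0 ≤ t) :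
    meanYule θ t = 1 + ∫ x in 0..t, Real.exp ((1 - θ) * x) := by
  rw [meanYule, tsum_convPow_reproMeasure_Icc θ ht, ENNReal.toReal_add one_ne_top ofReal_ne_top,
    toReal_one, toReal_ofReal (intervalIntegral.integral_nonneg ht fun x _ ↦ (Real.exp_pos _).le)]

/-- First moment of the general branching process `Y_θ` with reproduction
intensity `e^{-θa} da` (whose mean, summing the `n`-fold convolutions of the
reproduction measure over generations, is `meanYule θ t`):
`E[Y_θ(t)] = (e^{(1−θ)t} − θ)/(1−θ)` for `θ ≠ 1`, and `1 + t` for `θ = 1`. -/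
theorem mean_of_general_branching (θ : ℝ) (t : ℝ) (ht : 0 ≤ t) :
    (θ ≠ 1 → meanYule θ t = (Real.exp ((1 - θ) * t) - θ) / (1 - θ)) ∧
      (θ = 1 → meanYule θ t = 1 + t) := by
  rw [meanYule_eq_one_add_integral θ ht]
  refine ⟨fun hθ ↦ ?_, fun hθ ↦ by simp [hθ]⟩
  have hc : (1 : ℝ) - θ ≠ 0 := sub_ne_zero.mpr hθ.symm
  rw [intervalIntegral.integral_comp_mul_left (fun x ↦ Real.exp x) hc, integral_exp, mul_zero,
    Real.exp_zero, smul_eq_mul]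
  field_simp
  ring
end

section
/- For every μ > 0, the Borel probabilities sum as follows: Σ_{n≥1} e^{-μn}(μn)^{n-1}/n! = 1 if μ ≤ 1, and the sum is strictly less than 1 if μ > 1. -/
/-!
With the tree function `T(x) = ∑ₙ nⁿ⁻¹ xⁿ / n!`, the Borel weights with parameter `μ` sum to
`T(μe^{-μ}) / μ`. The identity `T(te^{-t}) = t` holds for small `t ≥ 0` by expanding each
`e^{-nt}` and summing along diagonals: the coefficient of `tᵐ` is, up to `tᵐ / m!`, the `m`-th
finite difference of `n ↦ nᵐ⁻¹`, which vanishes for `m ≥ 2`. Analytic continuation extends it to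
`[0, 1)`, and continuity of `T` on `[-e⁻¹, e⁻¹]` (absolute convergence there follows from
Stirling's bound) to `t = 1`. For `μ > 1`, `μe^{-μ} = νe^{-ν}` for some `ν < 1`, so the sum is
`ν / μ < 1`.
-/

open Real

/-- The Borel distribution weight at `n ≥ 1` with parameter `μ`:
`e^{-μn}(μn)^{n-1}/n!`. Here indexed by `n = m + 1` with `m : ℕ`. -/
noncomputable def borelWeight (μ : ℝ) (n : ℕ) : ℝ :=
  Real.exp (-μ * n) * (μ * n) ^ (n - 1) / n.factorial

open Set Topology Nat Finset.HasAntidiagonal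

-- Truncated subtraction gives `(0 : ℝ) ^ (0 - 1) = 1`, so the constant term is set to `0` by hand.
noncomputable def treeCoeff (n : ℕ) : ℝ := if n = 0 then 0 else (n : ℝ) ^ (n - 1) / n !

noncomputable def treeFun : ℝ → ℝ := FormalMultilinearSeries.ofScalarsSum treeCoeff

lemma treeCoeff_of_ne_zero {n : ℕ} (hn : n ≠ 0) : treeCoeff n = (n : ℝ) ^ (n - 1) / n ! :=
  if_neg hn

lemma treeCoeff_nonneg (n : ℕ) : 0 ≤ treeCoeff n := by
  unfold treeCoeff; split_ifs <;> positivity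

lemma treeFun_eq_tsum (x : ℝ) : treeFun x = ∑' n, treeCoeff n * x ^ n :=
  FormalMultilinearSeries.ofScalars_sum_eq treeCoeff x

lemma treeCoeff_mul_exp_neg_one_pow_le (n : ℕ) :
    treeCoeff n * exp (-1) ^ n ≤ ((n : ℝ) ^ (3 / 2 : ℝ))⁻¹ := by
  rcases eq_or_ne n 0 with rfl | hn
  · simp [treeCoeff]
  have hn0 : (0 : ℝ) < n := by positivity
  have hpow : (n : ℝ) ^ (3 / 2 : ℝ) = n * √n := by
    rw [show (3 / 2 : ℝ) = 1 + 1 / 2 by norm_num, rpow_add hn0, rpow_one, sqrt_eq_rpow]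
  have hn1 : (n : ℝ) ^ (n - 1) * n = n ^ n := by
    rw [← pow_succ, Nat.sub_add_cancel (Nat.one_le_iff_ne_zero.2 hn)]
  have hstirling : √n * (n ^ n * exp (-1) ^ n) ≤ n ! := by
    refine le_trans ?_ (Stirling.le_factorial_stirling n)
    rw [div_pow, exp_neg, inv_pow, ← div_eq_mul_inv]
    gcongr
    nlinarith [pi_gt_three]
  rw [treeCoeff_of_ne_zero hn, hpow, div_mul_eq_mul_div, div_le_iff₀ (by positivity)]
  calc (n : ℝ) ^ (n - 1) * exp (-1) ^ n
      = (n * √n)⁻¹ * (√n * (n ^ n * exp (-1) ^ n)) := by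
        rw [← hn1]; field_simp
    _ ≤ (n * √n)⁻¹ * n ! := by gcongr

lemma summable_treeCoeff_mul_exp_neg_one_pow :
    Summable fun n ↦ treeCoeff n * exp (-1) ^ n :=
  (summable_nat_rpow_inv.2 (by norm_num : (1 : ℝ) < 3 / 2)).of_nonneg_of_le
    (fun n ↦ mul_nonneg (treeCoeff_nonneg n) (by positivity)) treeCoeff_mul_exp_neg_one_pow_le

lemma norm_treeCoeff_mul_pow_le {x : ℝ} (hx : |x| ≤ exp (-1)) (n : ℕ) :
    ‖treeCoeff n * x ^ n‖ ≤ treeCoeff n * exp (-1) ^ n := by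
  rw [norm_mul, norm_pow, Real.norm_of_nonneg (treeCoeff_nonneg n)]
  exact mul_le_mul_of_nonneg_left (pow_le_pow_left₀ (norm_nonneg x) hx n) (treeCoeff_nonneg n)

lemma summable_treeCoeff_mul_pow {x : ℝ} (hx : |x| ≤ exp (-1)) :
    Summable fun n ↦ treeCoeff n * x ^ n :=
  summable_treeCoeff_mul_exp_neg_one_pow.of_norm_bounded (norm_treeCoeff_mul_pow_le hx)

lemma le_radius_ofScalars_treeCoeff :
    ENNReal.ofReal (exp (-1)) ≤ (FormalMultilinearSeries.ofScalars ℝ treeCoeff).radius := by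
  rw [ENNReal.ofReal]
  refine FormalMultilinearSeries.le_radius_of_summable_norm _ ?_
  simp only [FormalMultilinearSeries.ofScalars_norm, Real.coe_toNNReal _ (exp_nonneg _)]
  exact summable_treeCoeff_mul_exp_neg_one_pow.congr fun n ↦ by
    rw [Real.norm_of_nonneg (treeCoeff_nonneg n)]

lemma analyticAt_treeFun {x : ℝ} (hx : |x| < exp (-1)) : AnalyticAt ℝ treeFun x := by
  have hr := le_radius_ofScalars_treeCoeff
  refine ((FormalMultilinearSeries.ofScalars ℝ treeCoeff).hasFPowerSeriesOnBall
    (lt_of_lt_of_le (by simp [exp_pos]) hr)).analyticAt_of_mem ?_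
  rw [Metric.mem_eball, edist_zero_right]
  refine lt_of_lt_of_le ?_ hr
  rwa [← ofReal_norm, ENNReal.ofReal_lt_ofReal_iff (exp_pos _)]

lemma continuousOn_treeFun : ContinuousOn treeFun (Icc (-exp (-1)) (exp (-1))) := by
  rw [show treeFun = fun x ↦ ∑' n, treeCoeff n * x ^ n from funext treeFun_eq_tsum]
  exact continuousOn_tsum (fun n ↦ by fun_prop) summable_treeCoeff_mul_exp_neg_one_pow
    fun n x hx ↦ norm_treeCoeff_mul_pow_le (abs_le.2 hx) n

theorem HasSum.sum_antidiagonal {α A : Type*} [AddCommMonoid α] [TopologicalSpace α]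
    [ContinuousAdd α] [RegularSpace α] [AddCommMonoid A] [Finset.HasAntidiagonal A]
    {f : A × A → α} {a : α} (hf : HasSum f a) :
    HasSum (fun n ↦ ∑ p ∈ antidiagonal n, f p) a := by
  have := ((Finset.HasAntidiagonal.sigmaAntidiagonalEquivProd.hasSum_iff).2 hf).sigma
    fun n ↦ hasSum_fintype _
  simpa [Finset.sum_attach] using this

lemma sum_range_alternating_choose_mul_pow_eq_zero {R : Type*} [CommRing R] {j m : ℕ}
    (h : j < m) :
    ∑ n ∈ Finset.range (m + 1), (-1 : R) ^ (m - n) * m.choose n * (n : R) ^ j = 0 := by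
  have := congr_fun (fwdDiff_iter_pow_eq_zero_of_lt (R := R) h) 0
  rw [fwdDiff_iter_eq_sum_shift] at this
  simpa [zsmul_eq_mul] using this

noncomputable def treeExpTerm (t s : ℝ) (p : ℕ × ℕ) : ℝ :=
  treeCoeff p.1 * t ^ p.1 * ((p.1 * s) ^ p.2 / p.2 !)

lemma hasSum_treeExpTerm_row (t s : ℝ) (n : ℕ) :
    HasSum (fun k ↦ treeExpTerm t s (n, k)) (treeCoeff n * (t * exp s) ^ n) := by
  have h := (NormedSpace.expSeries_div_hasSum_exp (n * s)).mul_left (treeCoeff n * t ^ n)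
  rwa [← exp_eq_exp_ℝ, exp_nat_mul, mul_assoc, ← mul_pow] at h

lemma summable_treeExpTerm {t : ℝ} (ht : 0 ≤ t) (hte : t * exp t ≤ exp (-1)) :
    Summable (treeExpTerm t (-t)) := by
  have habs : ∀ p, |treeExpTerm t (-t) p| = treeExpTerm t t p := fun p ↦ by
    simp only [treeExpTerm, abs_mul, abs_div, abs_pow, abs_neg, Nat.abs_cast, abs_of_nonneg ht,
      abs_of_nonneg (treeCoeff_nonneg _)]
  refine summable_abs_iff.1 ?_
  simp_rw [habs]
  refine (summable_prod_of_nonneg fun p ↦ ?_).2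
    ⟨fun n ↦ (hasSum_treeExpTerm_row t t n).summable, ?_⟩
  · rw [← habs]; exact abs_nonneg _
  · simp_rw [(hasSum_treeExpTerm_row t t _).tsum_eq]
    exact summable_treeCoeff_mul_pow ((abs_of_nonneg (by positivity)).trans_le hte)

lemma treeExpTerm_neg_of_two_le {t : ℝ} {m n : ℕ} (hm : 2 ≤ m) (hn : n ≤ m) :
    treeExpTerm t (-t) (n, m - n) =
      (-1) ^ (m - n) * m.choose n * (n : ℝ) ^ (m - 1) * (t ^ m / m !) := by
  rcases eq_or_ne n 0 with rfl | hn0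
  · simp [treeExpTerm, treeCoeff, zero_pow (by omega : m - 1 ≠ 0)]
  have hpow_n : (n : ℝ) ^ (m - 1) = n ^ (n - 1) * n ^ (m - n) := by
    rw [← pow_add]; congr 1; omega
  have hpow_t : t ^ m = t ^ n * t ^ (m - n) := by rw [← pow_add]; congr 1; omega
  rw [treeExpTerm, treeCoeff_of_ne_zero hn0, Nat.cast_choose ℝ hn, hpow_n, hpow_t,
    show (n : ℝ) * -t = -1 * (n * t) by ring, mul_pow, mul_pow]
  field_simp

lemma sum_antidiagonal_treeExpTerm (t : ℝ) (m : ℕ) :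
    ∑ p ∈ antidiagonal m, treeExpTerm t (-t) p = if m = 1 then t else 0 := by
  rw [Finset.Nat.sum_antidiagonal_eq_sum_range_succ_mk]
  match m with
  | 0 => simp [treeExpTerm, treeCoeff]
  | 1 => simp [Finset.sum_range_succ, treeExpTerm, treeCoeff]
  | m + 2 =>
    rw [Finset.sum_congr rfl fun n hn ↦ treeExpTerm_neg_of_two_le (by omega)
      (Nat.lt_succ_iff.1 (Finset.mem_range.1 hn)), ← Finset.sum_mul,
      sum_range_alternating_choose_mul_pow_eq_zero (by omega), zero_mul, if_neg (by omega)]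

lemma treeFun_mul_exp_neg_of_mul_exp_le {t : ℝ} (ht : 0 ≤ t) (hte : t * exp t ≤ exp (-1)) :
    treeFun (t * exp (-t)) = t := by
  have hsum := (summable_treeExpTerm ht hte).hasSum
  have hrows := hsum.prod_fiberwise (hasSum_treeExpTerm_row t (-t))
  have hdiag := hsum.sum_antidiagonal
  simp_rw [sum_antidiagonal_treeExpTerm] at hdiag
  rw [treeFun_eq_tsum, hrows.tsum_eq, hdiag.unique (hasSum_ite_eq 1 t)]

lemma mul_exp_neg_lt_exp_neg_one {t : ℝ} (ht : t ≠ 1) : t * exp (-t) < exp (-1) := by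
  calc t * exp (-t) < exp (t - 1) * exp (-t) := by
        gcongr; linarith [add_one_lt_exp (sub_ne_zero.2 ht)]
    _ = exp (-1) := by rw [← exp_add]; ring_nf

lemma treeFun_mul_exp_neg {t : ℝ} (h0 : 0 ≤ t) (h1 : t ≤ 1) : treeFun (t * exp (-t)) = t := by
  have he2 : exp (-2) < 1 := exp_lt_one_iff.2 (by norm_num)
  have hanalytic : AnalyticOnNhd ℝ (fun s ↦ treeFun (s * exp (-s))) (Ioo 0 1) := fun s hs ↦
    (analyticAt_treeFun (by
      rw [abs_of_nonneg (mul_pos hs.1 (exp_pos _)).le]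
      exact mul_exp_neg_lt_exp_neg_one hs.2.ne)).comp (by fun_prop)
  have hsmall : (fun s ↦ treeFun (s * exp (-s))) =ᶠ[𝓝 (exp (-2) / 2)] id := by
    filter_upwards [Ioo_mem_nhds (by positivity) (half_lt_self (exp_pos (-2)))] with s hs
    refine treeFun_mul_exp_neg_of_mul_exp_le hs.1.le ?_
    calc s * exp s ≤ exp (-2) * exp 1 :=
          mul_le_mul hs.2.le (exp_le_exp.2 (by linarith [hs.2])) (exp_nonneg _) (exp_nonneg _)
      _ = exp (-1) := by rw [← exp_add]; norm_num
  have hopen : EqOn (fun s ↦ treeFun (s * exp (-s))) id (Ioo 0 1) :=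
    hanalytic.eqOn_of_preconnected_of_eventuallyEq analyticOnNhd_id isPreconnected_Ioo
      ⟨by positivity, by linarith⟩ hsmall
  refine hopen.of_subset_closure ?_ continuousOn_id Ioo_subset_Icc_self
    (by rw [closure_Ioo zero_ne_one]) ⟨h0, h1⟩
  exact continuousOn_treeFun.comp (by fun_prop) fun s hs ↦
    ⟨by nlinarith [exp_pos (-1), exp_pos (-s), hs.1], mul_exp_neg_le_exp_neg_one s⟩

lemma exists_mul_exp_neg_eq_of_one_lt {μ : ℝ} (hμ : 1 < μ) :
    ∃ ν ∈ Ioo 0 1, ν * exp (-ν) = μ * exp (-μ) := by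
  have hcont : ContinuousOn (fun s : ℝ ↦ s * exp (-s)) (Icc 0 1) := by fun_prop
  refine intermediate_value_Ioo zero_le_one hcont (show μ * exp (-μ) ∈ Ioo _ _ from ⟨?_, ?_⟩)
  · simpa using mul_pos (zero_lt_one.trans hμ) (exp_pos (-μ))
  · simpa using mul_exp_neg_lt_exp_neg_one hμ.ne'

lemma borelWeight_succ {μ : ℝ} (hμ : μ ≠ 0) (m : ℕ) :
    borelWeight μ (m + 1) = μ⁻¹ * (treeCoeff (m + 1) * (μ * exp (-μ)) ^ (m + 1)) := by
  rw [borelWeight, treeCoeff_of_ne_zero m.succ_ne_zero, Nat.add_sub_cancel, mul_pow μ (exp _),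
    ← exp_nat_mul, mul_pow]
  field_simp
  ring_nf

lemma tsum_treeCoeff_succ_mul_pow (x : ℝ) :
    ∑' m : ℕ, treeCoeff (m + 1) * x ^ (m + 1) = treeFun x := by
  rw [treeFun_eq_tsum]
  refine Nat.succ_injective.tsum_eq (f := fun n ↦ treeCoeff n * x ^ n) fun n hn ↦ ?_
  have hn0 : n ≠ 0 := by rintro rfl; simp [treeCoeff] at hn
  exact ⟨n - 1, Nat.succ_pred_eq_of_ne_zero hn0⟩

lemma tsum_borelWeight {μ : ℝ} (hμ : μ ≠ 0) :
    ∑' m : ℕ, borelWeight μ (m + 1) = μ⁻¹ * treeFun (μ * exp (-μ)) := by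
  simp_rw [borelWeight_succ hμ, tsum_mul_left, tsum_treeCoeff_succ_mul_pow]

/-- For `μ > 0`, the Borel weights `∑_{n≥1} e^{-μn}(μn)^{n-1}/n!` sum to `1`
if `μ ≤ 1`, and to strictly less than `1` if `μ > 1`. -/
theorem borel_sum (μ : ℝ) (hμ : 0 < μ) :
    (μ ≤ 1 → ∑' m : ℕ, borelWeight μ (m + 1) = 1) ∧
      (1 < μ → ∑' m : ℕ, borelWeight μ (m + 1) < 1) := by
  rw [tsum_borelWeight hμ.ne']
  refine ⟨fun hμ1 ↦ ?_, fun hμ1 ↦ ?_⟩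
  · rw [treeFun_mul_exp_neg hμ.le hμ1, inv_mul_cancel₀ hμ.ne']
  · obtain ⟨ν, ⟨hν0, hν1⟩, hνμ⟩ := exists_mul_exp_neg_eq_of_one_lt hμ1
    rw [← hνμ, treeFun_mul_exp_neg hν0.le hν1.le, inv_mul_lt_one₀ hμ]
    linarith
end

section
/- Let N be a standard Poisson process, b > 1, x > 0, and ν(x) = inf{t > 0 : bt − N(t) > x}. Then for every integer n ≥ 0, P(bν(x) − x = n) = (1/n!)·e^{-(x+n)/b}·x·(x+n)^{n-1}·b^{-n}. -/
open MeasureTheory ProbabilityTheory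

/-- A standard (rate one) Poisson process: monotone right-continuous `ℕ`-valued
paths started from `0`, with independent increments, the increment over
`[s,t]` being Poisson distributed with parameter `t - s`. -/
structure IsStdPoissonProcess {Ω : Type*} [MeasurableSpace Ω] (P : Measure Ω)
    (N : ℝ → Ω → ℕ) : Prop where
  isProb : IsProbabilityMeasure P
  meas : ∀ t, Measurable (N t)
  init : ∀ ω, N 0 ω = 0
  mono : ∀ ω, MonotoneOn (fun t => N t ω) (Set.Ici 0)
  rightCont : ∀ ω, ∀ t ≥ (0:ℝ), ∃ ε > 0, ∀ s ∈ Set.Ico t (t + ε), N s ω = N t ω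
  indepIncr : ∀ (n : ℕ) (t : ℕ → ℝ), Monotone t → (∀ i, 0 ≤ t i) →
    iIndepFun
      (fun (i : Fin n) ω => N (t (i + 1)) ω - N (t i) ω) P
  poissonIncr : ∀ s t : ℝ, 0 ≤ s → s ≤ t → ∀ k : ℕ,
    P {ω | N t ω - N s ω = k} =
      ENNReal.ofReal (Real.exp (-(t - s)) * (t - s) ^ k / k.factorial)

/-- First passage time of the drifted process `t ↦ b t − N(t)` above level `x`. -/
noncomputable def nu {Ω : Type*} (N : ℝ → Ω → ℕ) (b x : ℝ) (ω : Ω) : ℝ :=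
  sInf {t : ℝ | 0 < t ∧ x < b * t - N t ω}

/-!
Put `T j = (x + j) / b`, the time at which `b t - x` reaches the level `j`. Because `N` is
integer-valued, nondecreasing and right-continuous, `b ν(x) - x` is the first `j` with
`N (T j) = j` (and `ν(x) = sInf ∅ = 0` if there is none). Splitting `{N (T n) = n}` according to
this first index and using independent Poisson increments gives the renewal equation
`P(N (T n) = n) = ∑_{m ≤ n} P(b ν(x) - x = m) P(N (T n) - N (T m) = n - m)`, which determines
the distribution recursively. The claimed law solves it: after clearing the common factor
`e^{-(x+n)/b} / (n! bⁿ)` this is Abel's identity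
`∑_k (n choose k) x (x + k)^(k-1) (y - k)^(n-k) = (x + y)^n` at `y = n`.
-/

open Finset

theorem sum_range_neg_one_pow_mul_choose_mul_add_pow_eq_zero {R : Type*} [CommRing R]
    {j n : ℕ} (hjn : j < n) (x : R) :
    ∑ k ∈ range (n + 1), (-1) ^ (n - k) * (n.choose k : R) * (x + k) ^ j = 0 := by
  have h := congrFun (fwdDiff_iter_pow_eq_zero_of_lt (R := R) hjn) x
  rw [fwdDiff_iter_eq_sum_shift] at h
  simpa [zsmul_eq_mul] using h

theorem hasDerivAt_sum_choose_mul_sub_pow (c : ℕ → ℝ) (n : ℕ) (y : ℝ) :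
    HasDerivAt
      (fun y => ∑ k ∈ range (n + 2), ((n + 1).choose k : ℝ) * c k * (y - k) ^ (n + 1 - k))
      ((n + 1) * ∑ k ∈ range (n + 1), (n.choose k : ℝ) * c k * (y - k) ^ (n - k)) y := by
  have hterm (k : ℕ) := (((hasDerivAt_id y).sub_const (k : ℝ)).pow (n + 1 - k)).const_mul
    (((n + 1).choose k : ℝ) * c k)
  refine (HasDerivAt.fun_sum fun k (_ : k ∈ range (n + 2)) => hterm k).congr_deriv ?_
  rw [sum_range_succ, Nat.sub_self, Nat.cast_zero, zero_mul, zero_mul, mul_zero, add_zero,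
    mul_sum]
  refine sum_congr rfl fun k _ => ?_
  have hchoose : ((n + 1).choose k : ℝ) * (n + 1 - k : ℕ) = n.choose k * (n + 1) := by
    exact_mod_cast (Nat.choose_mul_succ_eq n k).symm
  rw [id, mul_one, Nat.sub_sub, Nat.add_sub_add_right]
  linear_combination (c k * (y - k) ^ (n - k)) * hchoose

theorem sum_choose_mul_zpow_mul_sub_pow {x : ℝ} (hx : x ≠ 0) (n : ℕ) (y : ℝ) :
    ∑ k ∈ range (n + 1), (n.choose k : ℝ) * (x * (x + k) ^ ((k : ℤ) - 1)) * (y - k) ^ (n - k)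
      = (x + y) ^ n := by
  induction n generalizing y with
  | zero => simp [hx]
  | succ n ih =>
    -- Both sides have `y`-derivative `(n + 1) (x + y) ^ n` by induction, and they agree at
    -- `y = -x`, where the left side is an `(n + 1)`-st finite difference of a polynomial of
    -- degree `n`.
    set F : ℝ → ℝ := fun y => ∑ k ∈ range (n + 2), ((n + 1).choose k : ℝ) *
      (x * (x + k) ^ ((k : ℤ) - 1)) * (y - k) ^ (n + 1 - k) - (x + y) ^ (n + 1)
    have hF : ∀ y, HasDerivAt F 0 y := fun y => by
      refine ((hasDerivAt_sum_choose_mul_sub_pow (fun k => x * (x + k) ^ ((k : ℤ) - 1)) n y).sub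
        (((hasDerivAt_id y).const_add x).pow (n + 1))).congr_deriv ?_
      rw [ih]
      simp
    have hpow (k : ℕ) (hk : k ≤ n + 1) :
        x * (x + k) ^ ((k : ℤ) - 1) * (x + k) ^ (n + 1 - k) = x * (x + k) ^ n := by
      rcases k with _ | j
      · simp only [Nat.cast_zero, add_zero, zero_sub, zpow_neg_one, Nat.sub_zero, pow_succ]
        field_simp
      · simp only [Nat.cast_succ, add_sub_cancel_right, zpow_natCast, mul_assoc, ← pow_add]
        congr 3
        omega
    have hF_neg : F (-x) = 0 := by
      have hterm : ∀ k ∈ range (n + 2),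
          ((n + 1).choose k : ℝ) * (x * (x + k) ^ ((k : ℤ) - 1)) * (-x - k) ^ (n + 1 - k)
            = x * ((-1) ^ (n + 1 - k) * ((n + 1).choose k : ℝ) * (x + k) ^ n) := fun k hk => by
        rw [show -x - k = -1 * (x + k) by ring, mul_pow]
        linear_combination ((n + 1).choose k * (-1) ^ (n + 1 - k) : ℝ) *
          hpow k (Nat.lt_succ_iff.mp (mem_range.mp hk))
      simp only [F, sum_congr rfl hterm, ← mul_sum,
        sum_range_neg_one_pow_mul_choose_mul_add_pow_eq_zero n.lt_succ_self, add_neg_cancel]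
      simp
    exact sub_eq_zero.mp <| (is_const_of_deriv_eq_zero (fun z => (hF z).differentiableAt)
      (fun z => (hF z).deriv) y (-x)).trans hF_neg

noncomputable def poissonWeight (r : ℝ) (k : ℕ) : ℝ :=
  Real.exp (-r) * r ^ k / k.factorial

theorem poissonWeight_nonneg {r : ℝ} (hr : 0 ≤ r) (k : ℕ) : 0 ≤ poissonWeight r k := by
  unfold poissonWeight
  positivity

noncomputable def firstPassageProb (b x : ℝ) (n : ℕ) : ℝ :=
  (1 / n.factorial) * Real.exp (-(x + n) / b) * x * (x + n) ^ ((n : ℝ) - 1) * b ^ (-(n : ℝ))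

theorem firstPassageProb_mul_poissonWeight {b : ℝ} (hb : 0 < b) (x : ℝ) (m k : ℕ) :
    firstPassageProb b x m * poissonWeight (k / b) k =
      Real.exp (-((x + (m + k)) / b)) / ((m + k).factorial * b ^ (m + k)) *
        (((m + k).choose m : ℝ) * (x * (x + m) ^ ((m : ℤ) - 1)) * k ^ k) := by
  have hrpow : (x + m) ^ ((m : ℝ) - 1) = (x + m) ^ ((m : ℤ) - 1) := by
    rw [← Real.rpow_intCast]
    push_cast
    rfl
  have hexp :
      Real.exp (-(x + m) / b) * Real.exp (-(k / b)) = Real.exp (-((x + (m + k)) / b)) := by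
    rw [← Real.exp_add]
    ring_nf
  rw [firstPassageProb, poissonWeight, hrpow, Real.rpow_neg hb.le, Real.rpow_natCast,
    Nat.cast_add_choose, ← hexp, div_pow]
  field_simp
  ring

theorem sum_firstPassageProb_mul_poissonWeight {b x : ℝ} (hb : 0 < b) (hx : x ≠ 0) (n : ℕ) :
    ∑ m ∈ range (n + 1),
        firstPassageProb b x m * poissonWeight ((x + n) / b - (x + m) / b) (n - m) =
      poissonWeight ((x + n) / b) n := by
  have hterm : ∀ m ∈ range (n + 1),
      firstPassageProb b x m * poissonWeight ((x + n) / b - (x + m) / b) (n - m) =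
        Real.exp (-((x + n) / b)) / (n.factorial * b ^ n) *
          ((n.choose m : ℝ) * (x * (x + m) ^ ((m : ℤ) - 1)) * (n - m) ^ (n - m)) :=
      fun m hm => by
    obtain ⟨k, rfl⟩ := Nat.exists_eq_add_of_le (Nat.lt_succ_iff.mp (mem_range.mp hm))
    rw [show (x + ↑(m + k)) / b - (x + m) / b = k / b by push_cast; ring, Nat.add_sub_cancel_left,
      firstPassageProb_mul_poissonWeight hb x m k]
    push_cast
    ring
  rw [sum_congr rfl hterm, ← mul_sum, sum_choose_mul_zpow_mul_sub_pow hx, poissonWeight,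
    div_pow]
  field_simp

theorem eq_of_forall_sum_range_succ_mul_eq {R : Type*} [Ring R] {a a' : ℕ → R}
    {K : ℕ → ℕ → R} (hK : ∀ n, K n n = 1)
    (h : ∀ n, ∑ m ∈ range (n + 1), a m * K n m = ∑ m ∈ range (n + 1), a' m * K n m) :
    a = a' := by
  funext n
  induction n using Nat.strong_induction_on with
  | _ n ih =>
    have hn := h n
    rw [sum_range_succ, sum_range_succ, hK, mul_one, mul_one,
      sum_congr rfl fun m hm => by rw [ih m (mem_range.mp hm)]] at hn
    exact add_left_cancel hn

theorem Monotone.exists_le_apply_eq_self {f : ℕ → ℕ} (hf : Monotone f) {k : ℕ}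
    (hk : f k ≤ k) : ∃ j ≤ k, f j = j := by
  induction k with
  | zero => exact ⟨0, le_rfl, Nat.le_zero.mp hk⟩
  | succ k ih =>
    by_cases hfix : f (k + 1) = k + 1
    · exact ⟨k + 1, le_rfl, hfix⟩
    · have hmono : f k ≤ f (k + 1) := hf (by omega)
      obtain ⟨j, hjk, hj⟩ := ih (by omega)
      exact ⟨j, hjk.trans k.le_succ, hj⟩

theorem Monotone.apply_sub_eq_of_forall_succ_sub_eq {f g : ℕ → ℕ} (hf : Monotone f)
    (hg : Monotone g) {a b : ℕ} (hab : a ≤ b)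
    (h : ∀ i, a ≤ i → i < b → f (i + 1) - f i = g (i + 1) - g i) : f b - f a = g b - g a := by
  induction b, hab using Nat.le_induction with
  | base => simp
  | succ b hab ih =>
    have := h b hab b.lt_succ_self
    have := ih fun i hi hib => h i hi (hib.trans b.lt_succ_self)
    have : f a ≤ f b := hf hab
    have : f b ≤ f (b + 1) := hf (by omega)
    have : g a ≤ g b := hg hab
    have : g b ≤ g (b + 1) := hg (by omega)
    omega

theorem monotone_add_natCast_div {b : ℝ} (hb : 0 < b) (x : ℝ) :
    Monotone fun j : ℕ => (x + j) / b :=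
  fun i j hij => by simp only; gcongr

theorem ProbabilityTheory.IndepFun.measure_inter_eq_mul_of_countable {Ω β γ : Type*}
    [MeasurableSpace Ω] {μ : Measure Ω} [MeasurableSpace β] [Countable β]
    [MeasurableSingletonClass β] [MeasurableSpace γ] [Countable γ] [MeasurableSingletonClass γ]
    {f : Ω → β} {g : Ω → γ}
    (hfg : IndepFun f g μ) {E F : Set Ω} (hE : ∀ ω ω', f ω = f ω' → ω ∈ E → ω' ∈ E)
    (hF : ∀ ω ω', g ω = g ω' → ω ∈ F → ω' ∈ F) : μ (E ∩ F) = μ E * μ F := by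
  have hE' : f ⁻¹' (f '' E) = E :=
    Set.Subset.antisymm (fun ω ⟨ω', hω', hf⟩ => hE ω' ω hf hω') (Set.subset_preimage_image f E)
  have hF' : g ⁻¹' (g '' F) = F :=
    Set.Subset.antisymm (fun ω ⟨ω', hω', hg⟩ => hF ω' ω hg hω') (Set.subset_preimage_image g F)
  rw [← hE', ← hF']
  exact hfg.measure_inter_preimage_eq_mul _ _ (Set.to_countable _).measurableSet
    (Set.to_countable _).measurableSet

def firstMatch {Ω : Type*} (N : ℝ → Ω → ℕ) (T : ℕ → ℝ) (m : ℕ) : Set Ω :=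
  {ω | N (T m) ω = m ∧ ∀ j < m, N (T j) ω ≠ j}

section FirstMatch

variable {Ω : Type*} {N : ℝ → Ω → ℕ} {T : ℕ → ℝ}

theorem pairwise_disjoint_firstMatch :
    Pairwise (Function.onFun Disjoint (firstMatch N T)) := by
  intro i j hij
  refine Set.disjoint_left.mpr fun ω hi hj => ?_
  rcases hij.lt_or_gt with h | h
  · exact hj.2 i h hi.1
  · exact hi.2 j h hj.1

theorem measurableSet_firstMatch [MeasurableSpace Ω] (hN : ∀ t, Measurable (N t)) (m : ℕ) :
    MeasurableSet (firstMatch N T m) := by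
  have : firstMatch N T m = N (T m) ⁻¹' {m} ∩ ⋂ j, ⋂ (_ : j < m), (N (T j) ⁻¹' {j})ᶜ := by
    ext; simp [firstMatch]
  rw [this]
  exact (hN _ (measurableSet_singleton m)).inter <| .iInter fun j => .iInter fun _ =>
    (hN _ (measurableSet_singleton j)).compl

theorem setOf_apply_eq_eq_biUnion_firstMatch (hN : ∀ ω, Monotone fun j => N (T j) ω)
    (n : ℕ) :
    {ω | N (T n) ω = n} =
      ⋃ m ∈ range (n + 1), firstMatch N T m ∩ {ω | N (T n) ω - N (T m) ω = n - m} := by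
  ext ω
  simp only [Set.mem_ofPred_eq, Set.mem_iUnion, Set.mem_inter_iff, mem_range, exists_prop]
  constructor
  · intro hn
    have hex : ∃ j, N (T j) ω = j := ⟨n, hn⟩
    have hle : Nat.find hex ≤ n := Nat.find_min' hex hn
    refine ⟨Nat.find hex, by omega, ⟨Nat.find_spec hex, fun j hj => Nat.find_min hex hj⟩, ?_⟩
    rw [hn, Nat.find_spec hex]
  · rintro ⟨m, hm, ⟨hmatch, -⟩, hincr⟩
    have := hN ω (Nat.lt_succ_iff.mp hm)
    simp only at this
    omega

end FirstMatch

namespace IsStdPoissonProcess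

variable {Ω : Type*} [MeasurableSpace Ω] {P : Measure Ω} {N : ℝ → Ω → ℕ}
  (hN : IsStdPoissonProcess P N) {T : ℕ → ℝ} {b x : ℝ}
include hN

theorem monotone_comp (hT : Monotone T) (hT0 : 0 ≤ T 0) (ω : Ω) :
    Monotone fun j => N (T j) ω := fun i j hij =>
  hN.mono ω (hT0.trans (hT i.zero_le)) (hT0.trans (hT j.zero_le)) (hT hij)

theorem measure_firstMatch_inter (hT : Monotone T) (hT0 : 0 ≤ T 0) {m n : ℕ} (hmn : m ≤ n)
    (d : ℕ) :
    P (firstMatch N T m ∩ {ω | N (T n) ω - N (T m) ω = d}) =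
      P (firstMatch N T m) * P {ω | N (T n) ω - N (T m) ω = d} := by
  -- Increments of `N` over the grid `0, T 0, …, T n`: the first `m + 1` of them determine
  -- `firstMatch N T m`, the remaining ones determine `N (T n) - N (T m)`.
  let t : ℕ → ℝ := fun | 0 => 0 | j + 1 => T j
  have ht : Monotone t := monotone_nat_of_le_succ fun | 0 => hT0 | j + 1 => hT j.le_succ
  have ht0 : ∀ j, 0 ≤ t j := fun | 0 => le_rfl | j + 1 => hT0.trans (hT j.zero_le)
  have hpath := hN.monotone_comp ht le_rfl
  have hN0 : ∀ ω, N (t 0) ω = 0 := hN.init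
  let S : Finset (Fin (n + 1)) := univ.filter fun i => (i : ℕ) ≤ m
  let R : Finset (Fin (n + 1)) := univ.filter fun i => m < (i : ℕ)
  have hSR : Disjoint S R := disjoint_filter.mpr fun i _ h => not_lt.mpr h
  have hind := (hN.indepIncr (n + 1) t ht ht0).indepFun_finset S R hSR
    fun i => (hN.meas _).sub (hN.meas _)
  refine hind.measure_inter_eq_mul_of_countable (fun ω ω' h hω => ?_) (fun ω ω' h hω => ?_)
  · have hincr : ∀ i ≤ m, N (t (i + 1)) ω - N (t i) ω = N (t (i + 1)) ω' - N (t i) ω' :=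
      fun i hi => congrFun h ⟨⟨i, by omega⟩, by simp [S, hi]⟩
    have hval : ∀ j ≤ m, N (T j) ω' = N (T j) ω := fun j hj => by
      have := (hpath ω).apply_sub_eq_of_forall_succ_sub_eq (hpath ω') (j + 1).zero_le
        fun i _ hi => hincr i (by omega)
      simpa [hN0] using this.symm
    obtain ⟨hmatch, hfirst⟩ := hω
    exact ⟨(hval m le_rfl).trans hmatch, fun j hj => (hval j hj.le).trans_ne (hfirst j hj)⟩
  · have hincr : ∀ i, m < i → i ≤ n →
        N (t (i + 1)) ω - N (t i) ω = N (t (i + 1)) ω' - N (t i) ω' :=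
      fun i hmi hin => congrFun h ⟨⟨i, by omega⟩, by simp [R, hmi]⟩
    have := (hpath ω).apply_sub_eq_of_forall_succ_sub_eq (hpath ω') (by omega : m + 1 ≤ n + 1)
      fun i hi hin => hincr i (by omega) (by omega)
    simp only [Set.mem_ofPred_eq] at hω ⊢
    exact this ▸ hω

theorem measureReal_increment {s t : ℝ} (hs : 0 ≤ s) (hst : s ≤ t) (k : ℕ) :
    P.real {ω | N t ω - N s ω = k} = poissonWeight (t - s) k := by
  rw [measureReal_def, hN.poissonIncr s t hs hst k, ENNReal.toReal_ofReal]
  · rfl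
  · exact poissonWeight_nonneg (sub_nonneg.mpr hst) k

theorem measure_setOf_eq_sum_firstMatch (hT : Monotone T) (hT0 : 0 ≤ T 0) (n : ℕ) :
    P {ω | N (T n) ω = n} = ∑ m ∈ range (n + 1),
      P (firstMatch N T m) * P {ω | N (T n) ω - N (T m) ω = n - m} := by
  rw [setOf_apply_eq_eq_biUnion_firstMatch (hN.monotone_comp hT hT0), measure_biUnion_finset]
  · exact sum_congr rfl fun m hm =>
      hN.measure_firstMatch_inter hT hT0 (Nat.lt_succ_iff.mp (mem_range.mp hm)) _
  · exact fun i _ j _ hij =>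
      (pairwise_disjoint_firstMatch hij).mono Set.inter_subset_left Set.inter_subset_left
  · exact fun m _ => (measurableSet_firstMatch hN.meas m).inter
      (((hN.meas _).sub (hN.meas _)) (measurableSet_singleton _))

theorem poissonWeight_eq_sum_measureReal_firstMatch (hT : Monotone T) (hT0 : 0 ≤ T 0)
    (n : ℕ) :
    poissonWeight (T n) n =
      ∑ m ∈ range (n + 1), P.real (firstMatch N T m) * poissonWeight (T n - T m) (n - m) := by
  have := hN.isProb
  have h := congrArg ENNReal.toReal (hN.measure_setOf_eq_sum_firstMatch hT hT0 n)
  rw [ENNReal.toReal_sum fun _ _ => ENNReal.mul_ne_top (measure_ne_top _ _) (measure_ne_top _ _)]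
    at h
  simp only [ENNReal.toReal_mul, ← measureReal_def] at h
  have hstart : {ω | N (T n) ω = n} = {ω | N (T n) ω - N 0 ω = n} := by simp [hN.init]
  rw [hstart, hN.measureReal_increment le_rfl (hT0.trans (hT n.zero_le)), sub_zero] at h
  rw [h]
  exact sum_congr rfl fun m hm => by
    rw [hN.measureReal_increment (hT0.trans (hT m.zero_le))
      (hT (Nat.lt_succ_iff.mp (mem_range.mp hm)))]

theorem exists_match_lt (hb : 0 < b) (hx : 0 ≤ x) {ω : Ω} {t : ℝ}
    (ht : t ∈ {t : ℝ | 0 < t ∧ x < b * t - N t ω}) :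
    ∃ j : ℕ, N ((x + j) / b) ω = j ∧ (x + j) / b < t := by
  obtain ⟨ht0, hlevel⟩ := ht
  have hk : (x + N t ω) / b < t := by rw [div_lt_iff₀ hb]; linarith
  have hNk : N ((x + N t ω) / b) ω ≤ N t ω :=
    hN.mono ω (by positivity : (0 : ℝ) ≤ (x + N t ω) / b) ht0.le hk.le
  obtain ⟨j, hjk, hj⟩ := (hN.monotone_comp (monotone_add_natCast_div hb x) (by positivity)
    ω).exists_le_apply_eq_self hNk
  refine ⟨j, hj, lt_of_le_of_lt ?_ hk⟩
  gcongr

theorem exists_Ioo_subset_of_match (hb : 0 < b) (hx : 0 ≤ x) {ω : Ω} {k : ℕ}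
    (hk : N ((x + k) / b) ω = k) :
    ∃ ε > 0,
      Set.Ioo ((x + k) / b) ((x + k) / b + ε) ⊆ {t : ℝ | 0 < t ∧ x < b * t - N t ω} := by
  obtain ⟨ε, hε, hconst⟩ := hN.rightCont ω ((x + k) / b) (by positivity)
  refine ⟨ε, hε, fun s hs => ⟨lt_of_le_of_lt (by positivity) hs.1, ?_⟩⟩
  rw [hconst s ⟨hs.1.le, hs.2⟩, hk]
  have := (div_lt_iff₀' hb).mp hs.1
  linarith

theorem nu_eq_of_mem_firstMatch (hb : 0 < b) (hx : 0 ≤ x) {ω : Ω} {m : ℕ}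
    (hω : ω ∈ firstMatch N (fun j : ℕ => (x + j) / b) m) : nu N b x ω = (x + m) / b := by
  obtain ⟨ε, hε, hsub⟩ := hN.exists_Ioo_subset_of_match hb hx hω.1
  have hne : (Set.Ioo ((x + m) / b) ((x + m) / b + ε)).Nonempty :=
    Set.nonempty_Ioo.mpr (by linarith)
  apply le_antisymm
  · calc nu N b x ω ≤ sInf (Set.Ioo ((x + m) / b) ((x + m) / b + ε)) :=
          csInf_le_csInf ⟨0, fun t ht => ht.1.le⟩ hne hsub
      _ = (x + m) / b := csInf_Ioo (by linarith)
  · refine le_csInf (hne.mono hsub) fun t ht => ?_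
    obtain ⟨j, hj, hjt⟩ := hN.exists_match_lt hb hx ht
    have hmj : m ≤ j := not_lt.mp fun hjm => hω.2 j hjm hj
    exact le_of_lt (lt_of_le_of_lt (by gcongr) hjt)

theorem nu_eq_zero_of_forall_ne (hb : 0 < b) (hx : 0 ≤ x) {ω : Ω}
    (hω : ∀ j : ℕ, N ((x + j) / b) ω ≠ j) : nu N b x ω = 0 := by
  have hempty : {t : ℝ | 0 < t ∧ x < b * t - N t ω} = ∅ :=
    Set.eq_empty_of_forall_notMem fun t ht =>
      let ⟨j, hj, _⟩ := hN.exists_match_lt hb hx ht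
      hω j hj
  rw [nu, hempty, Real.sInf_empty]

theorem setOf_nu_eq (hb : 0 < b) (hx : 0 < x) (n : ℕ) :
    {ω | b * nu N b x ω - x = n} = firstMatch N (fun j : ℕ => (x + j) / b) n := by
  ext ω
  constructor
  · intro h
    by_cases hex : ∃ j : ℕ, N ((x + j) / b) ω = j
    · have hm : ω ∈ firstMatch N (fun j : ℕ => (x + j) / b) (Nat.find hex) :=
        ⟨Nat.find_spec hex, fun j hj => Nat.find_min hex hj⟩
      have hmn : (Nat.find hex : ℝ) = n := by
        rw [Set.mem_ofPred_eq, hN.nu_eq_of_mem_firstMatch hb hx.le hm, mul_div_cancel₀ _ hb.ne',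
          add_sub_cancel_left] at h
        exact h
      rwa [← Nat.cast_injective hmn]
    · rw [not_exists] at hex
      rw [Set.mem_ofPred_eq, hN.nu_eq_zero_of_forall_ne hb hx.le hex, mul_zero, zero_sub] at h
      linarith [(n.cast_nonneg : (0 : ℝ) ≤ n)]
  · intro hω
    rw [Set.mem_ofPred_eq, hN.nu_eq_of_mem_firstMatch hb hx.le hω, mul_div_cancel₀ _ hb.ne',
      add_sub_cancel_left]

end IsStdPoissonProcess

/-- For a standard Poisson process `N`, `b > 1`, `x > 0` and
`ν(x) = inf{t > 0 : bt − N(t) > x}`, one has for every integer `n ≥ 0`: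
`P(bν(x) − x = n) = (1/n!) e^{-(x+n)/b} x (x+n)^{n-1} b^{-n}`. -/
theorem passage_time_distribution {Ω : Type*} [MeasurableSpace Ω] (P : Measure Ω)
    (N : ℝ → Ω → ℕ) (hN : IsStdPoissonProcess P N)
    (b x : ℝ) (hb : 1 < b) (hx : 0 < x) (n : ℕ) :
    P {ω | b * nu N b x ω - x = n} =
      ENNReal.ofReal
        ((1 / n.factorial) * Real.exp (-(x + n) / b) * x * (x + n) ^ ((n:ℝ) - 1) * b ^ (-(n:ℝ))) := by
  have hb0 : 0 < b := one_pos.trans hb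
  have := hN.isProb
  have hprob : (fun m => P.real (firstMatch N (fun j : ℕ => (x + j) / b) m)) =
      firstPassageProb b x :=
    eq_of_forall_sum_range_succ_mul_eq
      (K := fun n m => poissonWeight ((x + n) / b - (x + m) / b) (n - m))
      (fun n => by simp [poissonWeight]) fun n => by
        rw [sum_firstPassageProb_mul_poissonWeight hb0 hx.ne',
          hN.poissonWeight_eq_sum_measureReal_firstMatch (monotone_add_natCast_div hb0 x)
            (by positivity)]
  rw [hN.setOf_nu_eq hb0 hx, ← ofReal_measureReal, congrFun hprob n, firstPassageProb]
end

section
/- Let θ < 1, ρ > 0. If e^{(θ−1)t}Y_θ(t) → W_θ in probability with W_θ > 0 a.s. (which holds when θ ≤ 0), and T(n) = inf{t : Y_θ(t) = n}, then T(n) − T(⌊Un⌋) converges in probability as n → ∞ to −(1−θ)^{-1} ln U, for U an independent uniform random variable on (0,1); in particular, the limit is exponentially distributed with parameter 1 − θ. -/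
/-!
Write `β = 1 - θ`. Since `Y t ≈ W e^{βt}`, the level `n` is reached at
`T(n) ≈ β⁻¹ (log n - log W)`. Convergence in probability at deterministic times does not
directly control `Y` at the random time `β⁻¹ (log n - log W)`; what does is that random monotone
functions converging pointwise in probability to the identity also converge at a random argument
(check finitely many grid points). Applied to `x ↦ log Y (β⁻¹ (log n + x)) - log n - log W` at
`x = -log W ± βε` this gives the asymptotics of `T(n)`, and applied to
`x ↦ T(⌊e^{βx} n⌋) - β⁻¹ (log n - log W)` at `x = β⁻¹ log U` it gives
`T(⌊Un⌋) ≈ β⁻¹ (log n + log U - log W)`. Subtracting, `T(n) - T(⌊Un⌋) → -β⁻¹ log U`, and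
`P(-β⁻¹ log U ≤ t) = P(U ≥ e^{-βt}) = 1 - e^{-βt}`.
-/

open MeasureTheory ProbabilityTheory Filter

noncomputable def hitTime {Ω : Type*} (Y : ℝ → Ω → ℕ) (n : ℕ) (ω : Ω) : ℝ :=
  sInf {t : ℝ | 0 ≤ t ∧ Y t ω = n}

open Real Topology

section ConvergenceInMeasure

variable {α ι : Type*} [MeasurableSpace α] {μ : Measure α} {l : Filter ι}

theorem tendsto_measure_of_ae_subset_union {s t t' : ι → Set α}
    (ht : Tendsto (fun i => μ (t i)) l (𝓝 0)) (ht' : Tendsto (fun i => μ (t' i)) l (𝓝 0))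
    (hs : ∀ᶠ i in l, ∀ᵐ ω ∂μ, ω ∈ s i → ω ∈ t i ∨ ω ∈ t' i) :
    Tendsto (fun i => μ (s i)) l (𝓝 0) := by
  refine tendsto_of_tendsto_of_tendsto_of_le_of_le' tendsto_const_nhds
    (by simpa using ht.add ht') (Eventually.of_forall fun _ => zero_le) ?_
  filter_upwards [hs] with i hi
  exact (measure_mono_ae hi).trans (measure_union_le _ _)

theorem MeasureTheory.TendstoInMeasure.add {E : Type*} [SeminormedAddCommGroup E]
    {f f' : ι → α → E} {g g' : α → E} (hf : TendstoInMeasure μ f l g)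
    (hf' : TendstoInMeasure μ f' l g') :
    TendstoInMeasure μ (fun i ω => f i ω + f' i ω) l fun ω => g ω + g' ω := by
  rw [tendstoInMeasure_iff_dist] at hf hf' ⊢
  intro ε hε
  refine tendsto_measure_of_ae_subset_union (hf (ε / 2) (half_pos hε)) (hf' (ε / 2) (half_pos hε))
    (Eventually.of_forall fun i => ae_of_all _ fun ω (hω : ε ≤ dist _ _) => ?_)
  by_contra! h
  simp only [Set.mem_ofPred_eq, not_le] at h
  linarith [h.1, h.2, dist_add_add_le (f i ω) (f' i ω) (g ω) (g' ω)]

theorem MeasureTheory.TendstoInMeasure.sub {E : Type*} [SeminormedAddCommGroup E]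
    {f f' : ι → α → E} {g g' : α → E} (hf : TendstoInMeasure μ f l g)
    (hf' : TendstoInMeasure μ f' l g') :
    TendstoInMeasure μ (fun i ω => f i ω - f' i ω) l fun ω => g ω - g' ω := by
  rw [tendstoInMeasure_iff_dist] at hf hf' ⊢
  intro ε hε
  refine tendsto_measure_of_ae_subset_union (hf (ε / 2) (half_pos hε)) (hf' (ε / 2) (half_pos hε))
    (Eventually.of_forall fun i => ae_of_all _ fun ω (hω : ε ≤ dist _ _) => ?_)
  by_contra! h
  simp only [Set.mem_ofPred_eq, not_le] at h
  linarith [h.1, h.2, dist_sub_sub_le (f i ω) (f' i ω) (g ω) (g' ω)]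

theorem tendstoInMeasure_const_of_tendsto {E : Type*} [PseudoMetricSpace E] {c : ι → E} {a : E}
    (hc : Tendsto c l (𝓝 a)) : TendstoInMeasure μ (fun i _ => c i) l fun _ => a := by
  rw [tendstoInMeasure_iff_dist]
  intro ε hε
  refine tendsto_nhds_of_eventually_eq ?_
  filter_upwards [Metric.tendsto_nhds.mp hc ε hε] with i hi
  simp [not_le.mpr hi]

theorem tendsto_measure_abs_gt_atTop [IsFiniteMeasure μ] {X : α → ℝ} (hX : AEMeasurable X μ) :
    Tendsto (fun r : ℝ => μ {ω | r < |X ω|}) atTop (𝓝 0) := by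
  have h := tendsto_measure_norm_gt_of_isTightMeasureSet
    (isTightMeasureSet_singleton (μ := μ.map X))
  simp only [Set.mem_singleton_iff, iSup_iSup_eq_left, Real.norm_eq_abs] at h
  refine h.congr fun r => ?_
  exact Measure.map_apply_of_aemeasurable hX (measurableSet_lt measurable_const measurable_abs)

-- The points `-M + kγ`, `k < ⌊2M/γ⌋₊ + 2`, form a grid of mesh `γ` covering `[-M, M]`.
theorem abs_sub_lt_of_monotone_of_grid {f : ℝ → ℝ} (hf : Monotone f) {M γ x : ℝ} (hγ : 0 < γ)
    (hx : |x| ≤ M) (hgrid : ∀ k < ⌊2 * M / γ⌋₊ + 2, |f (-M + k * γ) - (-M + k * γ)| < γ) :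
    |f x - x| < 2 * γ := by
  obtain ⟨hxl, hxr⟩ := abs_le.mp hx
  set k := ⌊(x + M) / γ⌋₊
  have hk : k * γ ≤ x + M := (le_div_iff₀ hγ).mp (Nat.floor_le (div_nonneg (by linarith) hγ.le))
  have hk' : x + M < (k + 1) * γ := (div_lt_iff₀ hγ).mp (Nat.lt_floor_add_one _)
  have hkK : k ≤ ⌊2 * M / γ⌋₊ := Nat.floor_mono (div_le_div_of_nonneg_right (by linarith) hγ.le)
  have hlow := abs_lt.mp (hgrid k (by omega))
  have hupp := abs_lt.mp (hgrid (k + 1) (by omega))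
  push_cast at hupp
  have h1 := hf (show -M + k * γ ≤ x by linarith)
  have h2 := hf (show x ≤ -M + (k + 1) * γ by linarith)
  exact abs_lt.mpr ⟨by linarith, by linarith⟩

theorem MeasureTheory.TendstoInMeasure.comp_of_monotone [IsFiniteMeasure μ] {F : ι → α → ℝ → ℝ}
    (hmono : ∀ᵐ ω ∂μ, ∀ i, Monotone (F i ω))
    (hF : ∀ x, TendstoInMeasure μ (fun i ω => F i ω x) l fun _ => x)
    {X : α → ℝ} (hX : AEMeasurable X μ) :
    TendstoInMeasure μ (fun i ω => F i ω (X ω)) l X := by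
  simp only [tendstoInMeasure_iff_dist, Real.dist_eq] at hF ⊢
  intro ε hε
  rw [ENNReal.tendsto_nhds_zero]
  intro η hη
  have hη2 : 0 < η / 2 := ENNReal.half_pos hη.ne'
  obtain ⟨M, hM⟩ := ((tendsto_measure_abs_gt_atTop hX).eventually_le_const hη2).exists
  set γ := ε / 2
  set K := ⌊2 * M / γ⌋₊ + 2
  set bad : ι → ℕ → Set α := fun i k =>
    {ω | γ ≤ |F i ω (-M + k * γ) - (-M + k * γ)|}
  have hgrid : Tendsto (fun i => ∑ k ∈ Finset.range K, μ (bad i k)) l (𝓝 0) := by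
    simpa using tendsto_finsetSum (Finset.range K) fun k _ => hF _ γ (half_pos hε)
  filter_upwards [hgrid.eventually_le_const hη2] with i hi
  calc μ {ω | ε ≤ |F i ω (X ω) - X ω|}
      ≤ μ ({ω | M < |X ω|} ∪ ⋃ k ∈ Finset.range K, bad i k) := by
        refine measure_mono_ae ?_
        filter_upwards [hmono] with ω hω (hε' : ε ≤ |F i ω (X ω) - X ω|)
        show ω ∈ {ω | M < |X ω|} ∪ ⋃ k ∈ Finset.range K, bad i k
        by_contra hgood
        simp only [Set.mem_union, Set.mem_iUnion, Finset.mem_range, not_or, not_exists, not_lt,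
          bad, Set.mem_ofPred_eq, not_le] at hgood
        have := abs_sub_lt_of_monotone_of_grid (hω i) (half_pos hε) hgood.1 hgood.2
        linarith
    _ ≤ μ {ω | M < |X ω|} + ∑ k ∈ Finset.range K, μ (bad i k) :=
        (measure_union_le _ _).trans (by gcongr; exact measure_biUnion_finset_le _ _)
    _ ≤ η := by simpa [ENNReal.add_halves] using add_le_add hM hi

theorem MeasureTheory.TendstoInMeasure.log [IsFiniteMeasure μ] {f : ℕ → α → ℝ} {g : α → ℝ}
    (hfg : TendstoInMeasure μ f atTop g) (hf : ∀ n, AEMeasurable (f n) μ)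
    (hg : ∀ᵐ ω ∂μ, g ω ≠ 0) :
    TendstoInMeasure μ (fun n ω => Real.log (f n ω)) atTop fun ω => Real.log (g ω) := by
  refine (exists_seq_tendstoInMeasure_atTop_iff (f := fun n ω => Real.log (f n ω)) fun n =>
    (measurable_log.comp_aemeasurable (hf n)).aestronglyMeasurable).mpr fun ns hns => ?_
  obtain ⟨ns', hns', hae⟩ := (exists_seq_tendstoInMeasure_atTop_iff fun n =>
    (hf n).aestronglyMeasurable).mp hfg ns hns
  refine ⟨ns', hns', ?_⟩
  filter_upwards [hae, hg] with ω hω hgω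
  exact ((continuousAt_log hgω).tendsto).comp hω

end ConvergenceInMeasure

theorem tendsto_log_floor_mul_sub_log {c : ℝ} (hc : 0 < c) :
    Tendsto (fun n : ℕ => Real.log ⌊c * n⌋₊ - Real.log n) atTop (𝓝 (Real.log c)) := by
  have hfloor : Tendsto (fun n : ℕ => ⌊c * n⌋₊) atTop atTop :=
    tendsto_nat_floor_atTop.comp (tendsto_natCast_atTop_atTop.const_mul_atTop hc)
  have h := ((continuousAt_log hc.ne').tendsto).comp
    ((tendsto_nat_floor_mul_div_atTop hc.le).comp tendsto_natCast_atTop_atTop)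
  refine h.congr' ?_
  filter_upwards [eventually_ge_atTop 1, hfloor.eventually_ge_atTop 1] with n hn hfl
  simp only [Function.comp_apply]
  rw [Real.log_div (by positivity) (by positivity)]

section Uniform

variable {Ω : Type*} [MeasurableSpace Ω] {P : Measure Ω} [IsProbabilityMeasure P] {U : Ω → ℝ}

theorem map_eq_volume_restrict_Icc (measU : AEMeasurable U P)
    (hUlaw : ∀ t ∈ Set.Icc (0:ℝ) 1, P {ω | U ω ≤ t} = ENNReal.ofReal t) :
    P.map U = volume.restrict (Set.Icc 0 1) := by
  refine Measure.ext_of_Iic _ _ fun a => ?_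
  rw [Measure.map_apply_of_aemeasurable measU measurableSet_Iic,
    Measure.restrict_apply measurableSet_Iic]
  rcases lt_or_ge a 0 with ha | ha
  · have hempty : Set.Iic a ∩ Set.Icc 0 1 = ∅ := by
      ext x
      simp only [Set.mem_inter_iff, Set.mem_Iic, Set.mem_Icc, Set.mem_empty_iff_false, iff_false]
      intro h
      linarith
    rw [hempty, measure_empty]
    refine measure_mono_null (t := {ω | U ω ≤ 0})
      (fun ω (h : U ω ≤ a) => (show U ω ≤ 0 by linarith)) ?_
    simpa using hUlaw 0 ⟨le_rfl, zero_le_one⟩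
  rcases le_or_gt a 1 with ha1 | ha1
  · have hinter : Set.Iic a ∩ Set.Icc 0 1 = Set.Icc 0 a := by
      ext x
      simp only [Set.mem_inter_iff, Set.mem_Iic, Set.mem_Icc]
      exact ⟨fun ⟨hxa, hx0, _⟩ => ⟨hx0, hxa⟩, fun ⟨hx0, hxa⟩ => ⟨hxa, hx0, hxa.trans ha1⟩⟩
    rw [hinter, Real.volume_Icc, sub_zero]
    exact hUlaw a ⟨ha, ha1⟩
  · have hinter : Set.Iic a ∩ Set.Icc 0 1 = Set.Icc 0 1 :=
      Set.inter_eq_right.mpr fun x hx => Set.mem_Iic.mpr (hx.2.trans ha1.le)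
    rw [hinter, Real.volume_Icc, sub_zero, ENNReal.ofReal_one]
    refine le_antisymm prob_le_one ?_
    calc (1 : ENNReal) = P {ω | U ω ≤ 1} := by simpa using (hUlaw 1 ⟨zero_le_one, le_rfl⟩).symm
      _ ≤ P (U ⁻¹' Set.Iic a) := measure_mono fun ω (h : U ω ≤ 1) => (h.trans ha1.le : U ω ≤ a)

theorem measure_neg_inv_mul_log_le {β t : ℝ} (hβ : 0 < β) (measU : AEMeasurable U P)
    (hUlaw : ∀ t ∈ Set.Icc (0:ℝ) 1, P {ω | U ω ≤ t} = ENNReal.ofReal t) :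
    P {ω | -β⁻¹ * log (U ω) ≤ t} = ENNReal.ofReal (1 - exp (-β * t)) := by
  have hpos : ∀ᵐ ω ∂P, 0 < U ω := ae_iff.mpr (by simpa using hUlaw 0 ⟨le_rfl, zero_le_one⟩)
  calc P {ω | -β⁻¹ * log (U ω) ≤ t} = P (U ⁻¹' Set.Ici (exp (-β * t))) := by
        refine measure_congr (hpos.mono fun ω hω => propext ?_)
        change -β⁻¹ * log (U ω) ≤ t ↔ exp (-β * t) ≤ U ω
        rw [← log_le_log_iff (exp_pos _) hω, log_exp, neg_mul, neg_le, ← div_eq_inv_mul,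
          le_div_iff₀ hβ]
        constructor <;> intro h <;> linarith
    _ = ENNReal.ofReal (1 - exp (-β * t)) := by
        rw [← Measure.map_apply_of_aemeasurable measU measurableSet_Ici,
          map_eq_volume_restrict_Icc measU hUlaw, Measure.restrict_apply measurableSet_Ici]
        have hinter : Set.Ici (exp (-β * t)) ∩ Set.Icc 0 1 = Set.Icc (exp (-β * t)) 1 := by
          ext x
          simp only [Set.mem_inter_iff, Set.mem_Ici, Set.mem_Icc]
          exact ⟨fun ⟨hcx, _, hx1⟩ => ⟨hcx, hx1⟩,
            fun ⟨hcx, hx1⟩ => ⟨hcx, (exp_pos _).le.trans hcx, hx1⟩⟩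
        rw [hinter, Real.volume_Icc]

end Uniform

section Pathwise

variable {Ω : Type*} {Y : ℝ → Ω → ℕ} {ω : Ω} {n : ℕ} {t : ℝ}

theorem hitTime_nonneg : 0 ≤ hitTime Y n ω :=
  Real.sInf_nonneg fun _ hx => hx.1

theorem hitTime_le_of_count_eq (ht : 0 ≤ t) (h : Y t ω = n) : hitTime Y n ω ≤ t :=
  csInf_le ⟨0, fun _ hx => hx.1⟩ (show t ∈ {t | 0 ≤ t ∧ Y t ω = n} from ⟨ht, h⟩)

theorem hitTime_le (unitJumps : ∀ t ≥ (0:ℝ), ∀ k : ℕ, 1 ≤ k → k ≤ Y t ω →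
      ∃ s ∈ Set.Icc 0 t, Y s ω = k)
    (ht : 0 ≤ t) (hn : 1 ≤ n) (hnt : n ≤ Y t ω) : hitTime Y n ω ≤ t := by
  obtain ⟨s, ⟨hs0, hst⟩, hYs⟩ := unitJumps t ht n hn hnt
  exact (hitTime_le_of_count_eq hs0 hYs).trans hst

theorem count_hitTime
    (rightCont : ∀ t ≥ (0:ℝ), ∃ ε > 0, ∀ s ∈ Set.Ico t (t + ε), Y s ω = Y t ω)
    (hn : ∃ t, 0 ≤ t ∧ Y t ω = n) : Y (hitTime Y n ω) ω = n := by
  obtain ⟨ε, hε, hconst⟩ := rightCont _ hitTime_nonneg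
  obtain ⟨s, hs, hsε⟩ := Real.lt_sInf_add_pos hn hε
  rw [← hconst s ⟨hitTime_le_of_count_eq hs.1 hs.2, hsε⟩]
  exact hs.2

theorem le_count_of_hitTime_le (mono : MonotoneOn (fun t => Y t ω) (Set.Ici 0))
    (rightCont : ∀ t ≥ (0:ℝ), ∃ ε > 0, ∀ s ∈ Set.Ico t (t + ε), Y s ω = Y t ω)
    (hn : ∃ t, 0 ≤ t ∧ Y t ω = n) (ht : 0 ≤ t) (h : hitTime Y n ω ≤ t) : n ≤ Y t ω :=
  count_hitTime rightCont hn ▸ mono (Set.mem_Ici.mpr hitTime_nonneg) (Set.mem_Ici.mpr ht) h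

theorem hitTime_zero (mono : MonotoneOn (fun t => Y t ω) (Set.Ici 0)) : hitTime Y 0 ω = 0 := by
  by_cases h : ∃ t, 0 ≤ t ∧ Y t ω = 0
  · obtain ⟨t, ht, hYt⟩ := h
    have hY0 : Y 0 ω = 0 := Nat.eq_zero_of_le_zero
      (hYt ▸ mono (Set.mem_Ici.mpr le_rfl) (Set.mem_Ici.mpr ht) ht)
    exact le_antisymm (hitTime_le_of_count_eq le_rfl hY0) hitTime_nonneg
  · have hempty : {t : ℝ | 0 ≤ t ∧ Y t ω = 0} = ∅ :=
      Set.eq_empty_iff_forall_notMem.mpr fun t ht => h ⟨t, ht⟩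
    rw [hitTime, hempty, Real.sInf_empty]

-- An unattained level has hitting time `sInf ∅ = 0`.
theorem hitTime_monotone (mono : MonotoneOn (fun t => Y t ω) (Set.Ici 0))
    (rightCont : ∀ t ≥ (0:ℝ), ∃ ε > 0, ∀ s ∈ Set.Ico t (t + ε), Y s ω = Y t ω)
    (unitJumps : ∀ t ≥ (0:ℝ), ∀ k : ℕ, 1 ≤ k → k ≤ Y t ω → ∃ s ∈ Set.Icc 0 t, Y s ω = k)
    (hunb : ∀ n : ℕ, ∃ t, 0 ≤ t ∧ n ≤ Y t ω) : Monotone fun n => hitTime Y n ω := by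
  intro m n hmn
  rcases Nat.eq_zero_or_pos m with rfl | hm
  · exact (hitTime_zero mono).trans_le hitTime_nonneg
  obtain ⟨t, ht, hnt⟩ := hunb n
  obtain ⟨s, hs, hYs⟩ := unitJumps t ht n (hm.trans_le hmn) hnt
  refine hitTime_le unitJumps hitTime_nonneg hm ?_
  rw [count_hitTime rightCont ⟨s, hs.1, hYs⟩]
  exact hmn

theorem count_pos (hY0 : Y 0 ω = 1) (mono : MonotoneOn (fun t => Y t ω) (Set.Ici 0))
    (ht : 0 ≤ t) : 0 < Y t ω :=
  lt_of_lt_of_le (by simp [hY0]) (mono (Set.mem_Ici.mpr le_rfl) (Set.mem_Ici.mpr ht) ht)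

theorem monotone_log_count (hY0 : Y 0 ω = 1) (mono : MonotoneOn (fun t => Y t ω) (Set.Ici 0))
    {β a : ℝ} (hβ : 0 < β) : Monotone fun x => log (Y (max 0 (β⁻¹ * (a + x))) ω) := by
  intro x y hxy
  have htime : max 0 (β⁻¹ * (a + x)) ≤ max 0 (β⁻¹ * (a + y)) := by gcongr
  have hY := mono (Set.mem_Ici.mpr (le_max_left _ _)) (Set.mem_Ici.mpr (le_max_left _ _)) htime
  exact log_le_log (Nat.cast_pos.mpr (count_pos hY0 mono (le_max_left _ _))) (Nat.cast_le.mpr hY)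

theorem abs_hitTime_sub_lt (hY0 : Y 0 ω = 1) (mono : MonotoneOn (fun t => Y t ω) (Set.Ici 0))
    (rightCont : ∀ t ≥ (0:ℝ), ∃ ε > 0, ∀ s ∈ Set.Ico t (t + ε), Y s ω = Y t ω)
    (unitJumps : ∀ t ≥ (0:ℝ), ∀ k : ℕ, 1 ≤ k → k ≤ Y t ω → ∃ s ∈ Set.Icc 0 t, Y s ω = k)
    (hn : 1 ≤ n) {s ε : ℝ} (hlate : n < Y (max 0 (s + ε)) ω) (hearly : Y (max 0 (s - ε)) ω < n) :
    |hitTime Y n ω - s| < ε := by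
  obtain ⟨r, hr, hYr⟩ := unitJumps _ (le_max_left _ _) n hn hlate.le
  have hattained : ∃ t, 0 ≤ t ∧ Y t ω = n := ⟨r, hr.1, hYr⟩
  have hpos : 0 < s + ε := by
    by_contra! h
    rw [max_eq_left h, hY0] at hlate
    omega
  rw [max_eq_right hpos.le] at hlate
  have hupp : hitTime Y n ω < s + ε := by
    refine lt_of_le_of_ne (hitTime_le unitJumps hpos.le hn hlate.le) fun h => ?_
    rw [← h, count_hitTime rightCont hattained] at hlate
    exact lt_irrefl _ hlate
  have hlow : s - ε < hitTime Y n ω := by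
    by_contra! h
    exact (le_count_of_hitTime_le mono rightCont hattained (le_max_left _ _)
      (h.trans (le_max_right _ _))).not_gt hearly
  exact abs_lt.mpr ⟨by linarith, by linarith⟩

end Pathwise

section LevelCrossing

variable {Ω : Type*} [MeasurableSpace Ω] {P : Measure Ω} {Y : ℝ → Ω → ℕ} {W : Ω → ℝ} {β : ℝ}

theorem ae_forall_exists_le_count (hβ : 0 < β)
    (hconv : TendstoInMeasure P (fun t ω => exp (-β * t) * Y t ω) atTop W)
    (hW : ∀ᵐ ω ∂P, 0 < W ω) : ∀ᵐ ω ∂P, ∀ n : ℕ, ∃ t, 0 ≤ t ∧ n ≤ Y t ω := by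
  obtain ⟨ts, hts, hae⟩ := hconv.exists_seq_tendsto_ae'
  filter_upwards [hae, hW] with ω hlim hpos n
  by_contra! hbdd
  have hdecay : Tendsto (fun t => exp (-β * t) * n) atTop (𝓝 0) := by
    simpa using (tendsto_exp_atBot.comp
      (tendsto_id.const_mul_atTop_of_neg (neg_lt_zero.mpr hβ))).mul_const (n : ℝ)
  refine hpos.not_ge (le_of_tendsto_of_tendsto hlim (hdecay.comp hts) ?_)
  filter_upwards [hts.eventually_ge_atTop 0] with k hk
  exact mul_le_mul_of_nonneg_left (by exact_mod_cast (hbdd _ hk).le) (exp_pos _).le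

theorem tendstoInMeasure_log_count [IsFiniteMeasure P] (hβ : 0 < β)
    (measY : ∀ t, Measurable (Y t)) (hY0 : ∀ ω, Y 0 ω = 1)
    (mono : ∀ ω, MonotoneOn (fun t => Y t ω) (Set.Ici 0))
    (hconv : TendstoInMeasure P (fun t ω => exp (-β * t) * Y t ω) atTop W)
    (hW : ∀ᵐ ω ∂P, 0 < W ω) (x : ℝ) :
    TendstoInMeasure P
      (fun (n : ℕ) ω => log (Y (max 0 (β⁻¹ * (log n + x))) ω) - log n - log (W ω)) atTop
      fun _ => x := by
  have hlogn : Tendsto (fun n : ℕ => log n) atTop atTop :=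
    tendsto_log_atTop.comp tendsto_natCast_atTop_atTop
  have hσ : Tendsto (fun n : ℕ => max 0 (β⁻¹ * (log n + x))) atTop atTop :=
    tendsto_atTop_mono (fun n => le_max_right _ _)
      ((tendsto_atTop_add_const_right _ x hlogn).const_mul_atTop (inv_pos.mpr hβ))
  have hlog := TendstoInMeasure.log (hconv.comp hσ)
    (fun n => (measurable_const.mul (measurable_from_nat.comp (measY _))).aemeasurable)
    (hW.mono fun _ h => h.ne')
  rw [tendstoInMeasure_iff_dist] at hlog ⊢
  intro ε hε
  -- at `t = β⁻¹ (log n + x) ≥ 0`, `log Y t - log n = log (e^{-βt} Y t) + x`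
  refine (hlog ε hε).congr' ?_
  filter_upwards [hlogn.eventually_ge_atTop (-x)] with n hn
  congr 1
  ext ω
  have hY : (Y (max 0 (β⁻¹ * (log n + x))) ω : ℝ) ≠ 0 :=
    Nat.cast_ne_zero.mpr (count_pos (hY0 ω) (mono ω) (le_max_left _ _)).ne'
  have hσn : -β * max 0 (β⁻¹ * (log n + x)) = -(log n + x) := by
    rw [max_eq_right (mul_nonneg (inv_nonneg.mpr hβ.le) (by linarith))]
    field_simp
  simp only [Function.comp_apply, Set.mem_ofPred_eq, Real.dist_eq]
  rw [log_mul (exp_pos _).ne' hY, log_exp, hσn]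
  ring_nf

theorem tendstoInMeasure_hitTime_sub_log [IsFiniteMeasure P] (hβ : 0 < β)
    (measY : ∀ t, Measurable (Y t)) (measW : Measurable W) (hY0 : ∀ ω, Y 0 ω = 1)
    (mono : ∀ ω, MonotoneOn (fun t => Y t ω) (Set.Ici 0))
    (rightCont : ∀ ω, ∀ t ≥ (0:ℝ), ∃ ε > 0, ∀ s ∈ Set.Ico t (t + ε), Y s ω = Y t ω)
    (unitJumps : ∀ ω, ∀ t ≥ (0:ℝ), ∀ k : ℕ, 1 ≤ k → k ≤ Y t ω →
      ∃ s ∈ Set.Icc 0 t, Y s ω = k)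
    (hconv : TendstoInMeasure P (fun t ω => exp (-β * t) * Y t ω) atTop W)
    (hW : ∀ᵐ ω ∂P, 0 < W ω) :
    TendstoInMeasure P (fun (n : ℕ) ω => hitTime Y n ω - β⁻¹ * (log n - log (W ω))) atTop
      fun _ => 0 := by
  set G : ℕ → Ω → ℝ → ℝ :=
    fun n ω x => log (Y (max 0 (β⁻¹ * (log n + x))) ω) - log n - log (W ω)
  have hmono : ∀ᵐ ω ∂P, ∀ n, Monotone (G n ω) := ae_of_all _ fun ω n x y hxy =>
    sub_le_sub_right (sub_le_sub_right (monotone_log_count (hY0 ω) (mono ω) hβ hxy) _) _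
  have hat : ∀ c : ℝ, TendstoInMeasure P (fun n ω => G n ω (-log (W ω) + c)) atTop
      fun ω => -log (W ω) + c := fun c =>
    TendstoInMeasure.comp_of_monotone hmono
      (tendstoInMeasure_log_count hβ measY hY0 mono hconv hW)
      (measW.log.neg.add_const c).aemeasurable
  -- at `x = -log W ± βε` the path `Y` is, with high probability, above resp. below level `n`
  rw [tendstoInMeasure_iff_dist]
  intro ε hε
  refine tendsto_measure_of_ae_subset_union
    (tendstoInMeasure_iff_dist.mp (hat (β * ε)) (β * ε) (by positivity))
    (tendstoInMeasure_iff_dist.mp (hat (β * -ε)) (β * ε) (by positivity)) ?_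
  filter_upwards [eventually_ge_atTop 1] with n hn
  refine ae_of_all _ fun ω (hω : ε ≤ dist _ 0) => ?_
  by_contra h
  simp only [Real.dist_eq, not_or, not_le, G] at h
  obtain ⟨hlate, hearly⟩ := h
  have htime : ∀ c, β⁻¹ * (log n + (-log (W ω) + β * c)) = β⁻¹ * (log n - log (W ω)) + c := by
    intro c
    field_simp
    ring
  rw [htime] at hlate hearly
  rw [← sub_eq_add_neg] at hearly
  have hn' : (0 : ℝ) < n := by exact_mod_cast hn
  have hlate' : (n : ℝ) < Y (max 0 (β⁻¹ * (log n - log (W ω)) + ε)) ω :=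
    (log_lt_log_iff hn' (Nat.cast_pos.mpr (count_pos (hY0 ω) (mono ω) (le_max_left _ _)))).mp
      (by linarith [(abs_lt.mp hlate).1])
  have hearly' : (Y (max 0 (β⁻¹ * (log n - log (W ω)) - ε)) ω : ℝ) < n :=
    (log_lt_log_iff (Nat.cast_pos.mpr (count_pos (hY0 ω) (mono ω) (le_max_left _ _))) hn').mp
      (by linarith [(abs_lt.mp hearly).2])
  rw [Real.dist_eq, sub_zero] at hω
  exact hω.not_gt (abs_hitTime_sub_lt (hY0 ω) (mono ω) (rightCont ω) (unitJumps ω) hn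
    (by exact_mod_cast hlate') (by exact_mod_cast hearly'))

theorem tendstoInMeasure_hitTime_floor_const_mul
    (hT : TendstoInMeasure P (fun (n : ℕ) ω => hitTime Y n ω - β⁻¹ * (log n - log (W ω)))
      atTop fun _ => 0)
    {c : ℝ} (hc : 0 < c) :
    TendstoInMeasure P
      (fun (n : ℕ) ω => hitTime Y ⌊c * n⌋₊ ω - β⁻¹ * (log n - log (W ω))) atTop
      fun _ => β⁻¹ * log c := by
  have hfloor : Tendsto (fun n : ℕ => ⌊c * n⌋₊) atTop atTop :=
    tendsto_nat_floor_atTop.comp (tendsto_natCast_atTop_atTop.const_mul_atTop hc)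
  have hscale := tendstoInMeasure_const_of_tendsto (μ := P)
    ((tendsto_log_floor_mul_sub_log hc).const_mul β⁻¹)
  convert (hT.comp hfloor).add hscale using 1
  · ext n ω
    simp only [Function.comp_apply]
    ring
  · simp

theorem tendstoInMeasure_hitTime_floor_mul [IsFiniteMeasure P] (hβ : 0 < β)
    (mono : ∀ ω, MonotoneOn (fun t => Y t ω) (Set.Ici 0))
    (rightCont : ∀ ω, ∀ t ≥ (0:ℝ), ∃ ε > 0, ∀ s ∈ Set.Ico t (t + ε), Y s ω = Y t ω)
    (unitJumps : ∀ ω, ∀ t ≥ (0:ℝ), ∀ k : ℕ, 1 ≤ k → k ≤ Y t ω →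
      ∃ s ∈ Set.Icc 0 t, Y s ω = k)
    (hunb : ∀ᵐ ω ∂P, ∀ n : ℕ, ∃ t, 0 ≤ t ∧ n ≤ Y t ω)
    (hT : TendstoInMeasure P (fun (n : ℕ) ω => hitTime Y n ω - β⁻¹ * (log n - log (W ω)))
      atTop fun _ => 0)
    {V : Ω → ℝ} (measV : AEMeasurable V P) (hV : ∀ᵐ ω ∂P, 0 < V ω) :
    TendstoInMeasure P
      (fun (n : ℕ) ω => hitTime Y ⌊V ω * n⌋₊ ω - β⁻¹ * (log n - log (W ω))) atTop
      fun ω => β⁻¹ * log (V ω) := by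
  set F : ℕ → Ω → ℝ → ℝ :=
    fun n ω x => hitTime Y ⌊exp (β * x) * n⌋₊ ω - β⁻¹ * (log n - log (W ω))
  have hmono : ∀ᵐ ω ∂P, ∀ n, Monotone (F n ω) := by
    filter_upwards [hunb] with ω hω n x y hxy
    have hlevel : ⌊exp (β * x) * n⌋₊ ≤ ⌊exp (β * y) * n⌋₊ := Nat.floor_mono (by gcongr)
    have := hitTime_monotone (mono ω) (rightCont ω) (unitJumps ω) hω hlevel
    simp only [F]
    linarith
  have hF : ∀ x, TendstoInMeasure P (fun n ω => F n ω x) atTop fun _ => x := fun x => by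
    simpa [log_exp, hβ.ne'] using tendstoInMeasure_hitTime_floor_const_mul hT (exp_pos (β * x))
  refine TendstoInMeasure.congr_left (fun n => ?_)
    (TendstoInMeasure.comp_of_monotone hmono hF
      ((measurable_log.comp_aemeasurable measV).const_mul β⁻¹))
  filter_upwards [hV] with ω hω
  simp only [F]
  rw [show β * (β⁻¹ * log (V ω)) = log (V ω) by field_simp, exp_log hω]

end LevelCrossing

theorem hit_time_gap_limit_general {Ω : Type*} [MeasurableSpace Ω] (P : Measure Ω)
    [IsProbabilityMeasure P] (θ : ℝ) (hθ : θ < 1)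
    (Y : ℝ → Ω → ℕ) (W : Ω → ℝ) (U : Ω → ℝ)
    (measY : Measurable fun p : ℝ × Ω => Y p.1 p.2)
    (measW : Measurable W) (measU : Measurable U)
    (Y0 : ∀ ω, Y 0 ω = 1)
    (mono : ∀ ω, MonotoneOn (fun t => Y t ω) (Set.Ici 0))
    (rightCont : ∀ ω, ∀ t ≥ (0:ℝ), ∃ ε > 0, ∀ s ∈ Set.Ico t (t + ε), Y s ω = Y t ω)
    (unitJumps : ∀ ω, ∀ t ≥ (0:ℝ), ∀ k : ℕ, 1 ≤ k → k ≤ Y t ω →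
      ∃ s ∈ Set.Icc 0 t, Y s ω = k)
    (hWpos : P {ω | 0 < W ω} = 1)
    (hconv : ∀ δ > (0:ℝ),
      Tendsto (fun t : ℝ => P {ω | δ ≤ |Real.exp ((θ - 1) * t) * Y t ω - W ω|})
        atTop (nhds 0))
    (hUlaw : ∀ t ∈ Set.Icc (0:ℝ) 1, P {ω | U ω ≤ t} = ENNReal.ofReal t) :
    (∀ δ > (0:ℝ),
      Tendsto (fun n : ℕ =>
          P {ω | δ ≤ |hitTime Y n ω - hitTime Y ⌊U ω * n⌋₊ ω
            - (-(1 - θ)⁻¹ * Real.log (U ω))|})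
        atTop (nhds 0)) ∧
      (∀ t : ℝ, 0 ≤ t →
        P {ω | -(1 - θ)⁻¹ * Real.log (U ω) ≤ t}
          = ENNReal.ofReal (1 - Real.exp (-(1 - θ) * t))) := by
  set β := 1 - θ
  have hβ : 0 < β := sub_pos.mpr hθ
  have hconv' : TendstoInMeasure P (fun t ω => exp (-β * t) * Y t ω) atTop W :=
    tendstoInMeasure_iff_dist.mpr fun δ hδ => by simpa [Real.dist_eq, β] using hconv δ hδ
  have hW : ∀ᵐ ω ∂P, 0 < W ω :=
    (ae_iff_measure_eq (measurableSet_lt measurable_const measW).nullMeasurableSet).mpr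
      (by rw [hWpos, measure_univ])
  have hU : ∀ᵐ ω ∂P, 0 < U ω := ae_iff.mpr (by simpa using hUlaw 0 ⟨le_rfl, zero_le_one⟩)
  have measYt : ∀ t, Measurable (Y t) := fun t => measY.comp measurable_prodMk_left
  have hT := tendstoInMeasure_hitTime_sub_log hβ measYt measW Y0 mono rightCont unitJumps hconv' hW
  have hTU := tendstoInMeasure_hitTime_floor_mul hβ mono rightCont unitJumps
    (ae_forall_exists_le_count hβ hconv' hW) hT measU.aemeasurable hU
  refine ⟨fun δ hδ => ?_, fun t _ => measure_neg_inv_mul_log_le hβ measU.aemeasurable hUlaw⟩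
  convert tendstoInMeasure_iff_dist.mp (hT.sub hTU) δ hδ using 6 with n ω
  rw [Real.dist_eq]
  ring_nf

/-- Let `θ < 1` and let `Y = Y_θ` be a counting process started from one individual
(monotone, right-continuous, with unit jumps) such that
`e^{(θ−1)t} Y(t) → W` in probability with `W > 0` a.s. (as holds for the general
branching process `Y_θ` when `θ ≤ 0`). If `T(n) = inf{t : Y(t) = n}` and `U` is an
independent uniform variable on `(0,1)`, then `T(n) − T(⌊Un⌋)` converges in
probability to `−(1−θ)⁻¹ ln U`, which is exponential with parameter `1−θ`. -/
theorem hit_time_gap_limit {Ω : Type*} [MeasurableSpace Ω] (P : Measure Ω)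
    [IsProbabilityMeasure P] (θ : ℝ) (hθ : θ < 1)
    (Y : ℝ → Ω → ℕ) (W : Ω → ℝ) (U : Ω → ℝ)
    (measY : Measurable fun p : ℝ × Ω => Y p.1 p.2)
    (measW : Measurable W) (measU : Measurable U)
    (Y0 : ∀ ω, Y 0 ω = 1)
    (mono : ∀ ω, MonotoneOn (fun t => Y t ω) (Set.Ici 0))
    (rightCont : ∀ ω, ∀ t ≥ (0:ℝ), ∃ ε > 0, ∀ s ∈ Set.Ico t (t + ε), Y s ω = Y t ω)
    (unitJumps : ∀ ω, ∀ t ≥ (0:ℝ), ∀ k : ℕ, 1 ≤ k → k ≤ Y t ω →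
      ∃ s ∈ Set.Icc 0 t, Y s ω = k)
    (hWpos : P {ω | 0 < W ω} = 1)
    (hconv : ∀ δ > (0:ℝ),
      Tendsto (fun t : ℝ => P {ω | δ ≤ |Real.exp ((θ - 1) * t) * Y t ω - W ω|})
        atTop (nhds 0))
    (hUlaw : ∀ t ∈ Set.Icc (0:ℝ) 1, P {ω | U ω ≤ t} = ENNReal.ofReal t)
    (hUindep : IndepFun U (fun ω => ((fun t : ℝ => Y t ω), W ω)) P) :
    (∀ δ > (0:ℝ),
      Tendsto (fun n : ℕ =>
          P {ω | δ ≤ |hitTime Y n ω - hitTime Y ⌊U ω * n⌋₊ ω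
            - (-(1 - θ)⁻¹ * Real.log (U ω))|})
        atTop (nhds 0)) ∧
      (∀ t : ℝ, 0 ≤ t →
        P {ω | -(1 - θ)⁻¹ * Real.log (U ω) ≤ t}
          = ENNReal.ofReal (1 - Real.exp (-(1 - θ) * t))) :=
  hit_time_gap_limit_general P θ hθ Y W U measY measW measU Y0 mono rightCont unitJumps hWpos hconv
    hUlaw
end
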